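/- Let $\{m_n\}_{n\ge 0}$ be non-decreasing positive integers, $W_n \in \mathbb{R}^{m_n \times m_{n-1}}$, and $b_n \in \mathbb{R}^{m_n}$. Suppose: (i) $\sum_{n=1}^\infty \|b_n\|_p < \infty$; (ii) for every $i \ge 1$ and every choice of $J_k \in \mathcal{D}_{m_k}$, the limit $\lim_{n\to\infty} I_{\infty,m_n} \prod_{k=i}^n J_k W_k$ exists in operator norm; (iii) there exists $C > 0$ with $\prod_{j=i}^n \|W_j\|_p \le C$ for all $1 \le i \le n$. Then for any choice of $J_n \in \mathcal{D}_{m_n}$, the sequence $c_n := I_{\infty,m_n} \sum_{i=1}^n \left(\prod_{k=i+1}^n J_k W_k\right) J_i b_i$ converges in $\ell^p$. -/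

import Mathlib

open scoped ENNReal
open Matrix Filter

noncomputable section


/-- The `m' × m` matrix with the identity on top and zero rows below. -/
def Ipad (m' m : ℕ) : Matrix (Fin m') (Fin m) ℝ :=
  Matrix.of fun i j => if (i : ℕ) = (j : ℕ) then 1 else 0

/-- The diagonal entries of an activation matrix are 0 or 1. -/
def ZeroOne {m : ℕ} (J : Fin m → ℝ) : Prop := ∀ i, J i = 0 ∨ J i = 1

/-- A matrix viewed as a bounded linear operator between `ℓ^p` spaces `ℝ^a → ℝ^b`. -/
def matCLM (p : ℝ≥0∞) [Fact (1 ≤ p)] {a b : ℕ} (A : Matrix (Fin b) (Fin a) ℝ) :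
    PiLp p (fun _ : Fin a => ℝ) →L[ℝ] PiLp p (fun _ : Fin b => ℝ) :=
  LinearMap.toContinuousLinearMap <|
    (WithLp.linearEquiv p ℝ (Fin b → ℝ)).symm.toLinearMap ∘ₗ
      A.mulVecLin ∘ₗ (WithLp.linearEquiv p ℝ (Fin a → ℝ)).toLinearMap

/-- Zero-padding of a finite vector into `ℓ^p`. -/
def padLp (p : ℝ≥0∞) [Fact (1 ≤ p)] {m : ℕ} (x : Fin m → ℝ) : lp (fun _ : ℕ => ℝ) p :=
  ∑ i : Fin m, lp.single p (i : ℕ) (x i)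

/-- Zero-padding as a bounded linear operator `ℝ^m → ℓ^p`. -/
def padCLM (p : ℝ≥0∞) [Fact (1 ≤ p)] (m : ℕ) :
    PiLp p (fun _ : Fin m => ℝ) →L[ℝ] lp (fun _ : ℕ => ℝ) p :=
  LinearMap.toContinuousLinearMap
    { toFun := fun x => padLp p ((WithLp.linearEquiv p ℝ (Fin m → ℝ)) x)
      map_add' := by
        intro x y
        simp only [padLp, WithLp.linearEquiv_apply]
        rw [← Finset.sum_add_distrib]
        refine Finset.sum_congr rfl fun i _ => ?_
        apply lp.ext
        funext j
        by_cases h : j = (i : ℕ)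
        · subst h
          simp [lp.single_apply_self]
        · simp [lp.single_apply_ne p _ _ h]
      map_smul' := by
        intro c x
        simp only [padLp, WithLp.linearEquiv_apply, RingHom.id_apply, Finset.smul_sum]
        refine Finset.sum_congr rfl fun i _ => ?_
        exact lp.single_smul p (i : ℕ) c _ }


/-- Componentwise ReLU. -/
def relu {m : ℕ} (x : Fin m → ℝ) : Fin m → ℝ := fun i => max (x i) 0

/-- The unit cube `[0,1]^d`. -/
def cube (d : ℕ) : Set (Fin d → ℝ) := {x | ∀ i, x i ∈ Set.Icc (0:ℝ) 1}

variable {m : ℕ → ℕ}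

/-- The deep ReLU network `N_n(x) = σ(W_n · + b_n) ∘ ⋯ ∘ σ(W_1 · + b_1) (x)`. -/
def net (W : ∀ n, Matrix (Fin (m (n+1))) (Fin (m n)) ℝ) (b : ∀ n, Fin (m (n+1)) → ℝ)
    (x : Fin (m 0) → ℝ) : ∀ n, Fin (m n) → ℝ
  | 0 => x
  | n+1 => relu (W n *ᵥ net W b x n + b n)

/-- The product `J_n W_n ⋯ J_1 W_1`. -/
def prodJW (W : ∀ n, Matrix (Fin (m (n+1))) (Fin (m n)) ℝ)
    (J : ∀ n, Fin (m (n+1)) → ℝ) : ∀ n, Matrix (Fin (m n)) (Fin (m 0)) ℝ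
  | 0 => 1
  | n+1 => (Matrix.diagonal (J n) * W n) * prodJW W J n

/-- The product `J_{i+t} W_{i+t} ⋯ J_{i+1} W_{i+1}` (product of `t` factors starting at layer `i+1`). -/
def prodJWFrom (W : ∀ n, Matrix (Fin (m (n+1))) (Fin (m n)) ℝ)
    (J : ∀ n, Fin (m (n+1)) → ℝ) (i : ℕ) : ∀ t, Matrix (Fin (m (i+t))) (Fin (m i)) ℝ
  | 0 => (1 : Matrix (Fin (m i)) (Fin (m i)) ℝ)
  | t+1 => (Matrix.diagonal (J (i+t)) * W (i+t)) * prodJWFrom W J i t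

/-- `∑_{i=1}^n (∏_{k=i+1}^n J_k W_k) J_i b_i`, defined by the recursion
`c_0 = 0`, `c_{n+1} = J_{n+1} W_{n+1} c_n + J_{n+1} b_{n+1}`. -/
def biasSum (W : ∀ n, Matrix (Fin (m (n+1))) (Fin (m n)) ℝ)
    (J : ∀ n, Fin (m (n+1)) → ℝ) (b : ∀ n, Fin (m (n+1)) → ℝ) : ∀ n, Fin (m n) → ℝ
  | 0 => 0
  | n+1 => (Matrix.diagonal (J n) * W n) *ᵥ biasSum W J b n + Matrix.diagonal (J n) *ᵥ b n

/-- Activation domain of a one-layer network. -/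
def actDom {a c : ℕ} (J : Fin c → ℝ) (W : Matrix (Fin c) (Fin a) ℝ) (b : Fin c → ℝ) :
    Set (Fin a → ℝ) :=
  {x | ∀ j, (J j = 1 → 0 < (W *ᵥ x + b) j) ∧ (J j ≠ 1 → (W *ᵥ x + b) j ≤ 0)}

/-- Activation domains of a multi-layer network. -/
def actDomMulti (W : ∀ n, Matrix (Fin (m (n+1))) (Fin (m n)) ℝ)
    (J : ∀ n, Fin (m (n+1)) → ℝ) (b : ∀ n, Fin (m (n+1)) → ℝ) : ℕ → Set (Fin (m 0) → ℝ)
  | 0 => cube (m 0)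
  | n+1 => {x ∈ actDomMulti W J b n | net W b x n ∈ actDom (J n) (W n) (b n)}

/-- The Toeplitz matrix of a filter mask `w = (w_0, …, w_s)`. -/
def toep (s mm : ℕ) (w : Fin (s+1) → ℝ) : Matrix (Fin (mm + s)) (Fin mm) ℝ :=
  Matrix.of fun i j =>
    if h : (j : ℕ) ≤ (i : ℕ) ∧ (i : ℕ) - (j : ℕ) ≤ s then w ⟨(i : ℕ) - (j : ℕ), by omega⟩ else 0

/-- The widths of a CNN: `m_0 = d`, `m_n = m_{n-1} + s_n`. -/
def cnnWidth (d : ℕ) (s : ℕ → ℕ) : ℕ → ℕ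
  | 0 => d
  | n+1 => cnnWidth d s n + s n

/-- The CNN: layer `n+1` maps `x ↦ σ(x * w^{(n+1)} + b_{n+1})`. -/
def cnnNet (d : ℕ) (s : ℕ → ℕ) (w : ∀ n, Fin (s n + 1) → ℝ)
    (b : ∀ n, Fin (cnnWidth d s (n+1)) → ℝ) (x : Fin d → ℝ) :
    ∀ n, Fin (cnnWidth d s n) → ℝ
  | 0 => x
  | n+1 => relu (fun i => (toep (s n) (cnnWidth d s n) (w n) *ᵥ cnnNet d s w b x n) i + b n i)



/-!
Unfolding the recursion, `c_n = ∑_{i<n} P_{i+1,n} J_i b_i`, where `P_{k,n}` is the product of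
the layers `k, …, n-1`. For fixed `i` the `i`-th term converges as `n → ∞` by (ii). Since
`0`-`1` diagonal matrices are contractions of `ℓ^p`, (iii) bounds every term by
`max 1 C * ‖b_i‖_p` uniformly in `n` (the `1` for the empty product), and these bounds are
summable by (i). Tannery's theorem (dominated convergence for series) concludes.
-/

lemma tendsto_sum_range_of_dominated {G : Type*} [NormedAddCommGroup G] [CompleteSpace G]
    {f : ℕ → ℕ → G} {g : ℕ → G} {bound : ℕ → ℝ} (h_sum : Summable bound)
    (hfg : ∀ i, Tendsto (f · i) atTop (nhds (g i))) (h_bound : ∀ i n, i < n → ‖f n i‖ ≤ bound i) :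
    Tendsto (fun n => ∑ i ∈ Finset.range n, f n i) atTop (nhds (∑' i, g i)) := by
  have hF := tendsto_tsum_of_dominated_convergence (f := fun n i => if i < n then f n i else 0)
    h_sum (fun i => (hfg i).congr' ((eventually_gt_atTop i).mono fun n hn => (if_pos hn).symm))
    (Eventually.of_forall fun n i => by
      split_ifs with hi
      · exact h_bound i n hi
      · simpa using (norm_nonneg _).trans (h_bound i (i+1) i.lt_succ_self))
  refine hF.congr fun n => ?_
  rw [tsum_eq_sum (s := Finset.range n) fun i hi => if_neg (Finset.mem_range.not.mp hi)]
  exact Finset.sum_congr rfl fun i hi => if_pos (Finset.mem_range.mp hi)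

lemma PiLp.norm_mono {ι : Type*} [Fintype ι] {E F : ι → Type*} [∀ i, NormedAddCommGroup (E i)]
    [∀ i, NormedAddCommGroup (F i)] {p : ℝ≥0∞} (hp : p ≠ 0) {x : PiLp p E} {y : PiLp p F}
    (h : ∀ i, ‖x i‖ ≤ ‖y i‖) : ‖x‖ ≤ ‖y‖ := by
  rw [← Equiv.lpPiLp.apply_symm_apply x, ← Equiv.lpPiLp.apply_symm_apply y,
    equiv_lpPiLp_norm, equiv_lpPiLp_norm]
  exact lp.norm_mono hp h

section Operators

variable (p : ℝ≥0∞) [Fact (1 ≤ p)]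

lemma matCLM_apply {a c : ℕ} (A : Matrix (Fin c) (Fin a) ℝ) (x : PiLp p fun _ : Fin a => ℝ) :
    matCLM p A x = WithLp.toLp p (A *ᵥ WithLp.ofLp x) :=
  rfl

lemma padCLM_apply (k : ℕ) (x : PiLp p fun _ : Fin k => ℝ) :
    padCLM p k x = padLp p (WithLp.ofLp x) :=
  rfl

lemma padLp_apply {k : ℕ} (v : Fin k → ℝ) (j : ℕ) :
    padLp p v j = if h : j < k then v ⟨j, h⟩ else 0 := by
  rw [padLp, lp.coeFn_sum, Finset.sum_apply]
  split_ifs with h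
  · rw [Finset.sum_eq_single ⟨j, h⟩ (fun i _ hi => lp.single_apply_ne p _ _
      fun hj => hi (Fin.ext hj.symm)) (by simp)]
    exact lp.single_apply_self p j _
  · exact Finset.sum_eq_zero fun i _ => lp.single_apply_ne p _ _ fun hj => h (hj ▸ i.2)

lemma norm_padLp_le {k : ℕ} (v : Fin k → ℝ) : ‖padLp p v‖ ≤ ‖WithLp.toLp p v‖ := by
  rcases eq_or_ne p ∞ with rfl | hp
  · refine lp.norm_le_of_forall_le (norm_nonneg _) fun j => ?_
    rw [padLp_apply]
    split_ifs with hj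
    · exact PiLp.norm_apply_le (WithLp.toLp ∞ v) ⟨j, hj⟩
    · simp
  · have hp' : 0 < p.toReal :=
      ENNReal.toReal_pos (zero_lt_one.trans_le (Fact.out : (1 : ℝ≥0∞) ≤ p)).ne' hp
    refine lp.norm_le_of_tsum_le hp' (norm_nonneg _) ?_
    rw [tsum_eq_sum (s := Finset.range k) fun j hj => by
        simp [padLp_apply, Finset.mem_range.not.mp hj, Real.zero_rpow hp'.ne'],
      ← Fin.sum_univ_eq_sum_range (fun j => ‖padLp p v j‖ ^ p.toReal),
      PiLp.norm_eq_sum hp', one_div, Real.rpow_inv_rpow (by positivity) hp'.ne']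
    simp [padLp_apply]

lemma padLp_sum {ι : Type*} {k : ℕ} (s : Finset ι)
    (v : ι → Fin k → ℝ) : padLp p (∑ i ∈ s, v i) = ∑ i ∈ s, padLp p (v i) :=
  map_sum ((padCLM p k).toLinearMap ∘ₗ (WithLp.linearEquiv p ℝ (Fin k → ℝ)).symm.toLinearMap) v s

lemma matCLM_one (k : ℕ) : matCLM p (1 : Matrix (Fin k) (Fin k) ℝ) = ContinuousLinearMap.id ℝ _ :=
  ContinuousLinearMap.ext fun x => by simp [matCLM_apply]

lemma matCLM_mul {a c e : ℕ} (A : Matrix (Fin e) (Fin c) ℝ) (B : Matrix (Fin c) (Fin a) ℝ) :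
    matCLM p (A * B) = (matCLM p A).comp (matCLM p B) :=
  ContinuousLinearMap.ext fun x => by simp [matCLM_apply, Matrix.mulVec_mulVec]

lemma norm_toLp_diagonal_mulVec_le {k : ℕ} {d : Fin k → ℝ} (hd : ZeroOne d) (v : Fin k → ℝ) :
    ‖WithLp.toLp p (Matrix.diagonal d *ᵥ v)‖ ≤ ‖WithLp.toLp p v‖ :=
  PiLp.norm_mono (zero_lt_one.trans_le Fact.out).ne' fun i => by
    rcases hd i with h | h <;> simp [Matrix.mulVec_diagonal, h]

lemma norm_matCLM_diagonal_le {k : ℕ} {d : Fin k → ℝ} (hd : ZeroOne d) :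
    ‖matCLM p (Matrix.diagonal d)‖ ≤ 1 :=
  ContinuousLinearMap.opNorm_le_bound _ zero_le_one fun x => by
    simpa [matCLM_apply] using norm_toLp_diagonal_mulVec_le p hd (WithLp.ofLp x)

lemma norm_matCLM_diagonal_mul_le {a k : ℕ} {d : Fin k → ℝ} (hd : ZeroOne d)
    (A : Matrix (Fin k) (Fin a) ℝ) :
    ‖matCLM p (Matrix.diagonal d * A)‖ ≤ ‖matCLM p A‖ := by
  rw [matCLM_mul]
  exact (ContinuousLinearMap.opNorm_comp_le _ _).trans
    (mul_le_of_le_one_left (norm_nonneg _) (norm_matCLM_diagonal_le p hd))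

end Operators

lemma Ipad_self (k : ℕ) : Ipad k k = 1 := by
  ext i j
  simp [Ipad, Matrix.one_apply, Fin.val_inj]

section Products

variable (W : ∀ n, Matrix (Fin (m (n+1))) (Fin (m n)) ℝ) (J : ∀ n, Fin (m (n+1)) → ℝ)

/-- The product of the layers `i, …, n-1` (0-indexed), i.e. `prodJWFrom W J i (n - i)`, but with
codomain indexed by `n` itself so that such products can be summed at fixed depth `n`.
For `n < i` the value is the junk `Ipad`. -/
def prodJWBetween (i : ℕ) : ∀ n, Matrix (Fin (m n)) (Fin (m i)) ℝ
  | 0 => Ipad (m 0) (m i)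
  | n+1 => if n < i then Ipad (m (n+1)) (m i)
      else (Matrix.diagonal (J n) * W n) * prodJWBetween i n

lemma prodJWBetween_self (i : ℕ) : prodJWBetween W J i i = 1 := by
  cases i with
  | zero => exact Ipad_self _
  | succ i => simp [prodJWBetween, Ipad_self]

lemma prodJWBetween_succ {i n : ℕ} (h : i ≤ n) :
    prodJWBetween W J i (n+1) = (Matrix.diagonal (J n) * W n) * prodJWBetween W J i n := by
  simp [prodJWBetween, Nat.not_lt.mpr h]

lemma prodJWBetween_add (i t : ℕ) : prodJWBetween W J i (i+t) = prodJWFrom W J i t := by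
  induction t with
  | zero => exact prodJWBetween_self W J i
  | succ t ih =>
    change prodJWBetween W J i (i + t + 1) = _
    rw [prodJWBetween_succ W J (Nat.le_add_right i t), ih]
    rfl

lemma biasSum_eq_sum (b : ∀ n, Fin (m (n+1)) → ℝ) (n : ℕ) :
    biasSum W J b n
      = ∑ i ∈ Finset.range n, prodJWBetween W J (i+1) n *ᵥ (Matrix.diagonal (J i) *ᵥ b i) := by
  induction n with
  | zero => rfl
  | succ n ih =>
    rw [biasSum, ih, Finset.sum_range_succ, prodJWBetween_self, Matrix.one_mulVec,
      Matrix.mulVec_sum]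
    congr 1
    refine Finset.sum_congr rfl fun i hi => ?_
    rw [prodJWBetween_succ W J (Finset.mem_range.mp hi), Matrix.mulVec_mulVec]

variable (p : ℝ≥0∞) [Fact (1 ≤ p)]

lemma norm_matCLM_prodJWFrom_le (hJ : ∀ n, ZeroOne (J n)) (i t : ℕ) :
    ‖matCLM p (prodJWFrom W J i t)‖ ≤ ∏ j ∈ Finset.Ico i (i+t), ‖matCLM p (W j)‖ := by
  induction t with
  | zero => simpa [prodJWFrom, matCLM_one] using ContinuousLinearMap.norm_id_le
  | succ t ih =>
    rw [show Finset.Ico i (i + (t+1)) = Finset.Ico i (i + t + 1) from rfl,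
      Finset.prod_Ico_succ_top (Nat.le_add_right i t),
      mul_comm, prodJWFrom, matCLM_mul]
    exact (ContinuousLinearMap.opNorm_comp_le _ _).trans
      (mul_le_mul (norm_matCLM_diagonal_mul_le p (hJ _) _) ih (norm_nonneg _) (norm_nonneg _))

lemma norm_matCLM_prodJWFrom_le_max (hJ : ∀ n, ZeroOne (J n)) {C : ℝ}
    (hbound : ∀ i n : ℕ, i ≤ n → ∏ j ∈ Finset.Icc i n, ‖matCLM p (W j)‖ ≤ C) (i t : ℕ) :
    ‖matCLM p (prodJWFrom W J i t)‖ ≤ max 1 C := by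
  refine (norm_matCLM_prodJWFrom_le W J p hJ i t).trans ?_
  cases t with
  | zero => simp
  | succ t =>
    rw [show Finset.Ico i (i + (t+1)) = Finset.Ico i (i + t + 1) from rfl,
      Finset.Ico_add_one_right_eq_Icc]
    exact (hbound i (i+t) (Nat.le_add_right i t)).trans (le_max_right 1 C)

lemma padLp_prodJWBetween_mulVec {i t n : ℕ} (h : i + t = n) (v : Fin (m i) → ℝ) :
    padLp p (prodJWBetween W J i n *ᵥ v)
      = padCLM p (m (i+t)) (matCLM p (prodJWFrom W J i t) (WithLp.toLp p v)) := by
  subst h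
  rw [padCLM_apply, matCLM_apply, prodJWBetween_add]

lemma tendsto_padLp_prodJWBetween_mulVec {i : ℕ}
    {L : PiLp p (fun _ : Fin (m i) => ℝ) →L[ℝ] lp (fun _ : ℕ => ℝ) p}
    (hL : Tendsto (fun t => (padCLM p (m (i+t))).comp (matCLM p (prodJWFrom W J i t)))
      atTop (nhds L)) (v : Fin (m i) → ℝ) :
    Tendsto (fun n => padLp p (prodJWBetween W J i n *ᵥ v)) atTop
      (nhds (L (WithLp.toLp p v))) := by
  rw [← tendsto_add_atTop_iff_nat i]
  refine (((continuous_eval_const _).tendsto L).comp hL).congr fun t => ?_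
  exact (padLp_prodJWBetween_mulVec W J p (Nat.add_comm i t) v).symm

lemma norm_padLp_prodJWBetween_mulVec_le (hJ : ∀ n, ZeroOne (J n)) {C : ℝ}
    (hbound : ∀ i n : ℕ, i ≤ n → ∏ j ∈ Finset.Icc i n, ‖matCLM p (W j)‖ ≤ C) {i n : ℕ}
    (hin : i ≤ n) (v : Fin (m i) → ℝ) :
    ‖padLp p (prodJWBetween W J i n *ᵥ v)‖ ≤ max 1 C * ‖WithLp.toLp p v‖ := by
  obtain ⟨t, rfl⟩ := Nat.exists_eq_add_of_le hin
  rw [padLp_prodJWBetween_mulVec W J p rfl, padCLM_apply]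
  calc _ ≤ ‖matCLM p (prodJWFrom W J i t) (WithLp.toLp p v)‖ := norm_padLp_le p _
    _ ≤ max 1 C * ‖WithLp.toLp p v‖ := (ContinuousLinearMap.le_opNorm _ _).trans
        (mul_le_mul_of_nonneg_right (norm_matCLM_prodJWFrom_le_max W J p hJ hbound i t)
          (norm_nonneg _))

end Products

theorem stmt7_general (p : ℝ≥0∞) [Fact (1 ≤ p)] (m : ℕ → ℕ)
    (W : ∀ n, Matrix (Fin (m (n+1))) (Fin (m n)) ℝ)
    (b : ∀ n, Fin (m (n+1)) → ℝ)
    (hb : Summable fun n => ‖(WithLp.equiv p (Fin (m (n+1)) → ℝ)).symm (b n)‖)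
    (hlim : ∀ i : ℕ, ∀ J : ∀ n, Fin (m (n+1)) → ℝ, (∀ n, ZeroOne (J n)) →
      ∃ L : PiLp p (fun _ : Fin (m i) => ℝ) →L[ℝ] lp (fun _ : ℕ => ℝ) p,
        Tendsto (fun t => (padCLM p (m (i+t))).comp (matCLM p (prodJWFrom W J i t)))
          atTop (nhds L))
    (C : ℝ)
    (hbound : ∀ i n : ℕ, i ≤ n → ∏ j ∈ Finset.Icc i n, ‖matCLM p (W j)‖ ≤ C)
    (J : ∀ n, Fin (m (n+1)) → ℝ) (hJ : ∀ n, ZeroOne (J n)) :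
    ∃ c : lp (fun _ : ℕ => ℝ) p,
      Tendsto (fun n => padLp p (biasSum W J b n)) atTop (nhds c) := by
  choose L hL using fun i => hlim (i+1) J hJ
  let d i := Matrix.diagonal (J i) *ᵥ b i
  have h_bound (i n : ℕ) (hin : i < n) :
      ‖padLp p (prodJWBetween W J (i+1) n *ᵥ d i)‖ ≤ max 1 C * ‖WithLp.toLp p (b i)‖ :=
    (norm_padLp_prodJWBetween_mulVec_le W J p hJ hbound hin (d i)).trans
      (mul_le_mul_of_nonneg_left (norm_toLp_diagonal_mulVec_le p (hJ i) (b i)) (by positivity))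
  refine ⟨_, (tendsto_sum_range_of_dominated (hb.mul_left (max 1 C))
    (fun i => tendsto_padLp_prodJWBetween_mulVec W J p (hL i) (d i)) h_bound).congr fun n => ?_⟩
  rw [biasSum_eq_sum, padLp_sum]

theorem stmt7 (p : ℝ≥0∞) [Fact (1 ≤ p)] (m : ℕ → ℕ) (hpos : ∀ n, 0 < m n)
    (hmono : ∀ n, m n ≤ m (n+1))
    (W : ∀ n, Matrix (Fin (m (n+1))) (Fin (m n)) ℝ)
    (b : ∀ n, Fin (m (n+1)) → ℝ)
    (hb : Summable fun n => ‖(WithLp.equiv p (Fin (m (n+1)) → ℝ)).symm (b n)‖)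
    (hlim : ∀ i : ℕ, ∀ J : ∀ n, Fin (m (n+1)) → ℝ, (∀ n, ZeroOne (J n)) →
      ∃ L : PiLp p (fun _ : Fin (m i) => ℝ) →L[ℝ] lp (fun _ : ℕ => ℝ) p,
        Tendsto (fun t => (padCLM p (m (i+t))).comp (matCLM p (prodJWFrom W J i t)))
          atTop (nhds L))
    (C : ℝ) (hC : 0 < C)
    (hbound : ∀ i n : ℕ, i ≤ n → ∏ j ∈ Finset.Icc i n, ‖matCLM p (W j)‖ ≤ C)
    (J : ∀ n, Fin (m (n+1)) → ℝ) (hJ : ∀ n, ZeroOne (J n)) :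
    ∃ c : lp (fun _ : ℕ => ℝ) p,
      Tendsto (fun n => padLp p (biasSum W J b n)) atTop (nhds c) :=
  stmt7_general p m W b hb hlim C hbound J hJ
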